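/- (Linear Libermann identity) Let V and W be finite-dimensional real vector spaces, p : V → W a surjective linear map with kernel F, and L ⊆ 𝕋V = V × V* a Lagrangian subspace. Then p^!(p_!(L)) = L[F × {0}], where L[J] := (L ∩ J^⊥) + J with respect to the pairing ⟨(u,ξ),(v,η)⟩ = ξ(v) + η(u), p_!(L) := {(p(u), η) : (u, η ∘ p) ∈ L}, and p^!(L') := {(u, η ∘ p) : (p(u), η) ∈ L'}. -/

import Mathlib

/-!
An element of `p^!(p_!(L))` has the form `(v, η ∘ p)` with `(u, η ∘ p) ∈ L` and `p u = p v`.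
Since `η ∘ p` annihilates `F = ker p`, this splits as `(u, η ∘ p) ∈ L ∩ J^⊥` plus
`(v - u, 0) ∈ J = F × {0}`. Conversely, because `p` is surjective, the covectors annihilating
`ker p` are exactly those of the form `η ∘ p`, so `L ∩ J^⊥ ⊆ p^!(p_!(L))`.
-/

open Module

variable {V W : Type*} [AddCommGroup V] [Module ℝ V] [AddCommGroup W] [Module ℝ W]

/-- The canonical symmetric pairing on the generalized tangent space `𝕋V = V × V*`:
`⟨(u,ξ),(v,η)⟩ = ξ(v) + η(u)`. -/
noncomputable def gpair : (V × Module.Dual ℝ V) →ₗ[ℝ] (V × Module.Dual ℝ V) →ₗ[ℝ] ℝ :=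
  LinearMap.mk₂ ℝ (fun a b => a.2 b.1 + b.2 a.1)
    (fun a a' b => by
      simp only [Prod.fst_add, Prod.snd_add, LinearMap.add_apply, map_add]; ring)
    (fun r a b => by
      simp only [Prod.smul_fst, Prod.smul_snd, LinearMap.smul_apply, map_smul,
        smul_eq_mul]; ring)
    (fun a b b' => by
      simp only [Prod.fst_add, Prod.snd_add, LinearMap.add_apply, map_add]; ring)
    (fun r a b => by
      simp only [Prod.smul_fst, Prod.smul_snd, LinearMap.smul_apply, map_smul,
        smul_eq_mul]; ring)

/-- Orthogonal complement with respect to the canonical pairing on `𝕋V`. -/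
noncomputable def gperp (S : Submodule ℝ (V × Module.Dual ℝ V)) :
    Submodule ℝ (V × Module.Dual ℝ V) where
  carrier := {a | ∀ b ∈ S, gpair a b = 0}
  add_mem' := by
    intro a b ha hb c hc
    rw [map_add, LinearMap.add_apply, ha c hc, hb c hc, add_zero]
  zero_mem' := by
    intro c hc
    rw [map_zero, LinearMap.zero_apply]
  smul_mem' := by
    intro r a ha c hc
    rw [map_smul, LinearMap.smul_apply, ha c hc, smul_zero]

/-- A subspace of `𝕋V` is Lagrangian if it equals its own orthogonal complement. -/
def IsLagrangian (L : Submodule ℝ (V × Module.Dual ℝ V)) : Prop :=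
  gperp L = L

/-- A linear map `π : V* → V` is skew-symmetric. -/
def IsSkew (π : Module.Dual ℝ V →ₗ[ℝ] V) : Prop :=
  ∀ ξ η : Module.Dual ℝ V, η (π ξ) = -(ξ (π η))

/-- The tangent product `L ⋆ R = {(u, ξ+η) : (u,ξ) ∈ L, (u,η) ∈ R}`. -/
def tanProd (L R : Submodule ℝ (V × Module.Dual ℝ V)) :
    Submodule ℝ (V × Module.Dual ℝ V) where
  carrier := {a | ∃ ξ η : Module.Dual ℝ V, (a.1, ξ) ∈ L ∧ (a.1, η) ∈ R ∧ a.2 = ξ + η}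
  add_mem' := by
    rintro a b ⟨ξ, η, h1, h2, h3⟩ ⟨ξ', η', h1', h2', h3'⟩
    refine ⟨ξ + ξ', η + η', ?_, ?_, ?_⟩
    · simpa [Prod.fst_add] using L.add_mem h1 h1'
    · simpa [Prod.fst_add] using R.add_mem h2 h2'
    · simp only [Prod.snd_add, h3, h3']; abel
  zero_mem' := ⟨0, 0, by first | simpa [Prod.mk_zero_zero] using L.zero_mem | exact L.zero_mem, by first | simpa [Prod.mk_zero_zero] using R.zero_mem | exact R.zero_mem, by simp⟩
  smul_mem' := by
    rintro r a ⟨ξ, η, h1, h2, h3⟩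
    refine ⟨r • ξ, r • η, ?_, ?_, ?_⟩
    · simpa [Prod.smul_fst] using L.smul_mem r h1
    · simpa [Prod.smul_fst] using R.smul_mem r h2
    · simp only [Prod.smul_snd, h3, smul_add]

/-- The cotangent product `L ⊛ R = {(u+v, ξ) : (u,ξ) ∈ L, (v,ξ) ∈ R}`. -/
def cotProd (L R : Submodule ℝ (V × Module.Dual ℝ V)) :
    Submodule ℝ (V × Module.Dual ℝ V) where
  carrier := {a | ∃ u v : V, (u, a.2) ∈ L ∧ (v, a.2) ∈ R ∧ a.1 = u + v}
  add_mem' := by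
    rintro a b ⟨u, v, h1, h2, h3⟩ ⟨u', v', h1', h2', h3'⟩
    refine ⟨u + u', v + v', ?_, ?_, ?_⟩
    · simpa [Prod.snd_add] using L.add_mem h1 h1'
    · simpa [Prod.snd_add] using R.add_mem h2 h2'
    · simp only [Prod.fst_add, h3, h3']; abel
  zero_mem' := ⟨0, 0, by first | simpa [Prod.mk_zero_zero] using L.zero_mem | exact L.zero_mem, by first | simpa [Prod.mk_zero_zero] using R.zero_mem | exact R.zero_mem, by simp⟩
  smul_mem' := by
    rintro r a ⟨u, v, h1, h2, h3⟩
    refine ⟨r • u, r • v, ?_, ?_, ?_⟩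
    · simpa [Prod.smul_snd] using L.smul_mem r h1
    · simpa [Prod.smul_snd] using R.smul_mem r h2
    · simp only [Prod.smul_fst, h3, smul_add]

/-- The backward image `φ^!(L) = {(u, η ∘ φ) : (φ(u), η) ∈ L}`. -/
def back (φ : V →ₗ[ℝ] W) (L : Submodule ℝ (W × Module.Dual ℝ W)) :
    Submodule ℝ (V × Module.Dual ℝ V) where
  carrier := {a | ∃ η : Module.Dual ℝ W, (φ a.1, η) ∈ L ∧ a.2 = η.comp φ}
  add_mem' := by
    rintro a b ⟨η, h1, h2⟩ ⟨η', h1', h2'⟩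
    refine ⟨η + η', ?_, ?_⟩
    · simpa [Prod.fst_add, map_add] using L.add_mem h1 h1'
    · simp only [Prod.snd_add, h2, h2', LinearMap.add_comp]
  zero_mem' := ⟨0, by first | simpa [Prod.mk_zero_zero] using L.zero_mem | exact L.zero_mem, by simp⟩
  smul_mem' := by
    rintro r a ⟨η, h1, h2⟩
    refine ⟨r • η, ?_, ?_⟩
    · simpa [Prod.smul_fst, map_smul] using L.smul_mem r h1
    · simp only [Prod.smul_snd, h2, LinearMap.smul_comp]

/-- The forward image `φ_!(L) = {(φ(u), η) : (u, η ∘ φ) ∈ L}`. -/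
def fwd (φ : V →ₗ[ℝ] W) (L : Submodule ℝ (V × Module.Dual ℝ V)) :
    Submodule ℝ (W × Module.Dual ℝ W) where
  carrier := {b | ∃ u : V, φ u = b.1 ∧ (u, b.2.comp φ) ∈ L}
  add_mem' := by
    rintro a b ⟨u, h1, h2⟩ ⟨u', h1', h2'⟩
    refine ⟨u + u', ?_, ?_⟩
    · simp only [map_add, h1, h1', Prod.fst_add]
    · have := L.add_mem h2 h2'
      simpa [Prod.snd_add, LinearMap.add_comp] using this
  zero_mem' := ⟨0, by simp, by first | simpa [Prod.mk_zero_zero] using L.zero_mem | exact L.zero_mem⟩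
  smul_mem' := by
    rintro r a ⟨u, h1, h2⟩
    refine ⟨r • u, ?_, ?_⟩
    · simp only [map_smul, h1, Prod.smul_fst]
    · have := L.smul_mem r h2
      simpa [Prod.smul_snd, LinearMap.smul_comp] using this

/-- The graph `Gr(π) = {(π(ξ), ξ) : ξ ∈ V*}` of a map `π : V* → V`. -/
def gr (π : Module.Dual ℝ V →ₗ[ℝ] V) : Submodule ℝ (V × Module.Dual ℝ V) where
  carrier := {a | π a.2 = a.1}
  add_mem' := by
    intro a b ha hb
    simp only [Set.mem_setOf_eq, Prod.fst_add, Prod.snd_add, map_add] at *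
    rw [ha, hb]
  zero_mem' := by simp
  smul_mem' := by
    intro r a ha
    simp only [Set.mem_setOf_eq, Prod.smul_fst, Prod.smul_snd, map_smul] at *
    rw [ha]

@[simp]
theorem gpair_apply (a b : V × Dual ℝ V) : gpair a b = a.2 b.1 + b.2 a.1 := rfl

theorem mem_gperp_prod_bot_iff (F : Submodule ℝ V) (a : V × Dual ℝ V) :
    a ∈ gperp (F.prod ⊥) ↔ a.2 ∈ F.dualAnnihilator := by
  rw [Submodule.mem_dualAnnihilator]
  constructor
  · intro ha k hk
    simpa using ha (k, 0) ⟨hk, Submodule.zero_mem _⟩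
  · rintro ha ⟨k, μ⟩ ⟨hk, hμ⟩
    obtain rfl : μ = 0 := hμ
    simpa using ha k hk

theorem back_fwd_le (p : V →ₗ[ℝ] W) (L : Submodule ℝ (V × Dual ℝ V)) :
    back p (fwd p L) ≤ (L ⊓ gperp ((LinearMap.ker p).prod ⊥)) ⊔ (LinearMap.ker p).prod ⊥ := by
  rintro ⟨v, ζ⟩ ⟨η, ⟨u, hu, huL⟩, rfl⟩
  have hη : η.comp p ∈ (LinearMap.ker p).dualAnnihilator :=
    (Submodule.mem_dualAnnihilator _).mpr fun k hk => by simp [LinearMap.mem_ker.mp hk]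
  have hvu : v - u ∈ LinearMap.ker p := by simp [hu]
  refine Submodule.mem_sup.mpr
    ⟨(u, η.comp p), ⟨huL, (mem_gperp_prod_bot_iff _ _).mpr hη⟩, (v - u, 0),
      ⟨hvu, Submodule.zero_mem _⟩, by simp⟩

theorem inf_gperp_ker_prod_bot_le_back_fwd {p : V →ₗ[ℝ] W} (hp : Function.Surjective p)
    (L : Submodule ℝ (V × Dual ℝ V)) :
    L ⊓ gperp ((LinearMap.ker p).prod ⊥) ≤ back p (fwd p L) := by
  rintro ⟨u, ξ⟩ ⟨huL, hperp⟩
  have hξ := (mem_gperp_prod_bot_iff _ _).mp hperp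
  rw [← LinearMap.range_dualMap_eq_dualAnnihilator_ker_of_surjective p hp] at hξ
  obtain ⟨η, rfl⟩ := hξ
  exact ⟨η, ⟨u, rfl, huL⟩, rfl⟩

theorem ker_prod_bot_le_back_fwd (p : V →ₗ[ℝ] W) (L : Submodule ℝ (V × Dual ℝ V)) :
    (LinearMap.ker p).prod ⊥ ≤ back p (fwd p L) := by
  rintro ⟨k, μ⟩ ⟨hk, hμ⟩
  obtain rfl : μ = 0 := hμ
  exact ⟨0, ⟨0, by simpa using (LinearMap.mem_ker.mp hk).symm, L.zero_mem⟩, by simp⟩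

theorem stmt10_general
    (p : V →ₗ[ℝ] W) (hp : Function.Surjective p)
    (L : Submodule ℝ (V × Module.Dual ℝ V)) :
    back p (fwd p L)
      = (L ⊓ gperp ((LinearMap.ker p).prod (⊥ : Submodule ℝ (Module.Dual ℝ V))))
          ⊔ (LinearMap.ker p).prod (⊥ : Submodule ℝ (Module.Dual ℝ V)) :=
  le_antisymm (back_fwd_le p L)
    (sup_le (inf_gperp_ker_prod_bot_le_back_fwd hp L) (ker_prod_bot_le_back_fwd p L))

theorem stmt10 [FiniteDimensional ℝ V] [FiniteDimensional ℝ W]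
    (p : V →ₗ[ℝ] W) (hp : Function.Surjective p)
    (L : Submodule ℝ (V × Module.Dual ℝ V)) (hL : IsLagrangian L) :
    back p (fwd p L)
      = (L ⊓ gperp ((LinearMap.ker p).prod (⊥ : Submodule ℝ (Module.Dual ℝ V))))
          ⊔ (LinearMap.ker p).prod (⊥ : Submodule ℝ (Module.Dual ℝ V)) :=
  stmt10_general p hp L
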